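/- Under the mixture setup, P(Ã) = 1/2 and, for each i = 1, …, n, X̃_i = E[1_Ã | G̃_i] almost surely; moreover each X̃_i takes at most 2m distinct values, so that (X̃_1, …, X̃_n) ∈ C(n, 2m). -/

import Mathlib

/-! On `{U = 1}` the flipped objects are `(X i, A)` and on `{U = 0}` they are `(1 - X i, Aᶜ)`.
Since `U` is independent of all the `G i` together with `A`, conditioning `1_A` on `G i ⊔ σ(U)`
gives the same as conditioning on `G i` alone, and since `{U = 1}` is `G i ⊔ σ(U)`-measurable,
the conditional expectation of `1_Ã` splits along it into `E[1_A | G i]` and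
`1 - E[1_A | G i]`. Independence also gives `P Ã = P A / 2 + P Aᶜ / 2 = 1 / 2`. -/

open MeasureTheory ProbabilityTheory Set

section PiSystem

variable {α : Type*}

theorem isPiSystem_image2_inter {C D : Set (Set α)} (hC : IsPiSystem C) (hD : IsPiSystem D) :
    IsPiSystem (image2 (· ∩ ·) C D) := by
  rintro _ ⟨s₁, hs₁, t₁, ht₁, rfl⟩ _ ⟨s₂, hs₂, t₂, ht₂, rfl⟩ hne
  rw [inter_inter_inter_comm]
  exact mem_image2_of_mem (hC _ hs₁ _ hs₂ (hne.mono (by intro x; simp +contextual)))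
    (hD _ ht₁ _ ht₂ (hne.mono (by intro x; simp +contextual)))

theorem generateFrom_image2_inter (m₁ m₂ : MeasurableSpace α) :
    MeasurableSpace.generateFrom
      (image2 (· ∩ ·) {s | MeasurableSet[m₁] s} {t | MeasurableSet[m₂] t}) = m₁ ⊔ m₂ := by
  refine le_antisymm (MeasurableSpace.generateFrom_le ?_) (sup_le ?_ ?_)
  · rintro _ ⟨s, hs, t, ht, rfl⟩
    exact (le_sup_left (a := m₁) (b := m₂) s hs).inter (le_sup_right (a := m₁) (b := m₂) t ht)
  · exact fun s hs ↦ MeasurableSpace.measurableSet_generateFrom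
      ⟨s, hs, univ, @MeasurableSet.univ _ m₂, inter_univ s⟩
  · exact fun t ht ↦ MeasurableSpace.measurableSet_generateFrom
      ⟨univ, @MeasurableSet.univ _ m₁, t, ht, univ_inter t⟩

end PiSystem

variable {Ω : Type*}

theorem setIntegral_eq_of_isPiSystem {E : Type*} [NormedAddCommGroup E] [NormedSpace ℝ E]
    {m m₀ : MeasurableSpace Ω} {μ : Measure[m₀] Ω}
    {f g : Ω → E} {p : Set (Set Ω)} (hm : m ≤ m₀) (h_eq : m = MeasurableSpace.generateFrom p)
    (hp : IsPiSystem p) (h_univ : univ ∈ p) (hf : Integrable f μ) (hg : Integrable g μ)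
    (basic : ∀ t ∈ p, ∫ x in t, f x ∂μ = ∫ x in t, g x ∂μ) {t : Set Ω}
    (ht : MeasurableSet[m] t) : ∫ x in t, f x ∂μ = ∫ x in t, g x ∂μ := by
  induction t, ht using MeasurableSpace.induction_on_inter h_eq hp with
  | empty => simp
  | basic t ht => exact basic t ht
  | compl t ht iht =>
    rw [setIntegral_compl (hm t ht) hf, setIntegral_compl (hm t ht) hg, ← setIntegral_univ,
      ← setIntegral_univ (f := g), basic univ h_univ, iht]
  | iUnion s hd hs ihs =>
    rw [integral_iUnion (fun n ↦ hm _ (hs n)) hd hf.integrableOn,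
      integral_iUnion (fun n ↦ hm _ (hs n)) hd hg.integrableOn]
    exact tsum_congr ihs

theorem ProbabilityTheory.Indep.setIntegral_eq_measureReal_mul {m₁ m₂ : MeasurableSpace Ω}
    [mΩ : MeasurableSpace Ω] {μ : Measure Ω} (hm₁ : m₁ ≤ mΩ) (hm₂ : m₂ ≤ mΩ)
    (hind : Indep m₁ m₂ μ) {s : Set Ω} (hs : MeasurableSet[m₁] s) {f : Ω → ℝ}
    (hf : Measurable[m₂] f) : ∫ x in s, f x ∂μ = μ.real s * ∫ x, f x ∂μ :=
  Indep.setIntegral_eq_mul (f := id) hm₁ (indep_of_indep_of_le_right hind hf.comap_le)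
    (hf.mono hm₂ le_rfl).aemeasurable hs aestronglyMeasurable_id

theorem condExp_sup_ae_eq_condExp_of_indep {m₁ m₂ m' : MeasurableSpace Ω}
    [mΩ : MeasurableSpace Ω] {μ : Measure Ω} [IsFiniteMeasure μ] (h₁ : m₁ ≤ m') (hm' : m' ≤ mΩ)
    (hm₂ : m₂ ≤ mΩ) (hind : Indep m₂ m' μ) {f : Ω → ℝ} (hf : StronglyMeasurable[m'] f)
    (hfi : Integrable f μ) : μ[f | m₁ ⊔ m₂] =ᵐ[μ] μ[f | m₁] := by
  have hle : m₁ ⊔ m₂ ≤ mΩ := sup_le (h₁.trans hm') hm₂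
  have hfactor : ∀ g : Ω → ℝ, StronglyMeasurable[m'] g → ∀ s, MeasurableSet[m₁] s →
      ∀ t, MeasurableSet[m₂] t → ∫ x in s ∩ t, g x ∂μ = μ.real t * ∫ x in s, g x ∂μ := by
    intro g hg s hs t ht
    have hs' : MeasurableSet s := h₁.trans hm' s hs
    rw [inter_comm, ← setIntegral_indicator hs', ← integral_indicator hs',
      hind.setIntegral_eq_measureReal_mul hm₂ hm' ht (hg.indicator (h₁ s hs)).measurable]
  refine (ae_eq_condExp_of_forall_setIntegral_eq hle hfi
    (fun s _ _ ↦ integrable_condExp.integrableOn) (fun s hs _ ↦ ?_)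
    ((stronglyMeasurable_condExp (m := m₁) (μ := μ) (f := f)).mono
      (le_sup_left : m₁ ≤ m₁ ⊔ m₂)).aestronglyMeasurable).symm
  refine setIntegral_eq_of_isPiSystem hle (generateFrom_image2_inter m₁ m₂).symm
    (isPiSystem_image2_inter (@MeasurableSpace.isPiSystem_measurableSet _ m₁)
      (@MeasurableSpace.isPiSystem_measurableSet _ m₂))
    ⟨univ, @MeasurableSet.univ _ m₁, univ, @MeasurableSet.univ _ m₂, inter_univ _⟩
    integrable_condExp hfi ?_ hs
  rintro _ ⟨s, hs, t, ht, rfl⟩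
  rw [hfactor _ (stronglyMeasurable_condExp.mono h₁) s hs t ht, hfactor f hf s hs t ht,
    setIntegral_condExp (h₁.trans hm') hfi hs]

theorem condExp_indicator_inter_union_compl_inter {m : MeasurableSpace Ω}
    [mΩ : MeasurableSpace Ω] {P : Measure Ω} [IsFiniteMeasure P] (hm : m ≤ mΩ) {A S : Set Ω}
    (hA : MeasurableSet A) (hS : MeasurableSet[m] S) :
    P[(A ∩ S ∪ Aᶜ ∩ Sᶜ).indicator (fun _ ↦ (1 : ℝ)) | m] =ᵐ[P]
      S.indicator (P[A.indicator (fun _ ↦ (1 : ℝ)) | m])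
        + Sᶜ.indicator (1 - P[A.indicator (fun _ ↦ (1 : ℝ)) | m]) := by
  set indA := A.indicator (fun _ ↦ (1 : ℝ))
  have hsplit : (A ∩ S ∪ Aᶜ ∩ Sᶜ).indicator (fun _ ↦ (1 : ℝ))
      = S.indicator indA + Sᶜ.indicator (1 - indA) := by
    ext ω
    by_cases hωA : ω ∈ A <;> by_cases hωS : ω ∈ S <;> simp [indA, hωA, hωS]
  have hAi : Integrable indA P := (integrable_const 1).indicator hA
  have hAci : Integrable (1 - indA) P := (integrable_const 1).sub hAi
  have hsub : P[1 - indA | m] =ᵐ[P] 1 - P[indA | m] :=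
    (condExp_sub (integrable_const (1 : ℝ)) hAi m).trans (by rw [condExp_const hm]; rfl)
  rw [hsplit]
  filter_upwards [condExp_add (hAi.indicator (hm _ hS)) (hAci.indicator (hm _ hS.compl)) m,
    condExp_indicator hAi hS, condExp_indicator hAci hS.compl, hsub] with ω hadd hS1 hS2 hsub
  by_cases hωS : ω ∈ S <;> simp [hadd, hS1, hS2, hωS, hsub]

section Mixture

variable {m : MeasurableSpace Ω} [mΩ : MeasurableSpace Ω] {P : Measure Ω} {U : Ω → ℝ}

theorem ae_eq_zero_or_eq_one_of_measure_eq_half [IsProbabilityMeasure P] (hU : Measurable U)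
    (hU0 : P {ω | U ω = 0} = 1 / 2) (hU1 : P {ω | U ω = 1} = 1 / 2) :
    ∀ᵐ ω ∂P, U ω = 0 ∨ U ω = 1 := by
  have hdisj : Disjoint {ω | U ω = 0} {ω | U ω = 1} :=
    disjoint_left.2 fun ω h0 h1 ↦ zero_ne_one (h0.symm.trans h1)
  rw [ae_iff_prob_eq_one (hU.eq_const 0 |>.or (hU.eq_const 1)), ofPred_or,
    measure_union hdisj (measurableSet_eq_fun hU measurable_const), hU0, hU1,
    ENNReal.add_halves]

theorem measure_inter_union_compl_inter_eq_half [IsProbabilityMeasure P] (hU : Measurable U)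
    (hU0 : P {ω | U ω = 0} = 1 / 2) (hU1 : P {ω | U ω = 1} = 1 / 2)
    (hind : Indep (MeasurableSpace.comap U inferInstance) m P) {A : Set Ω}
    (hA : MeasurableSet A) (hAm : MeasurableSet[m] A) :
    P ((A ∩ {ω | U ω = 1}) ∪ (Aᶜ ∩ {ω | U ω = 0})) = 1 / 2 := by
  have hU_level (c : ℝ) : MeasurableSet[MeasurableSpace.comap U inferInstance] {ω | U ω = c} :=
    ⟨{c}, measurableSet_singleton c, rfl⟩
  have hdisj : Disjoint (A ∩ {ω | U ω = 1}) (Aᶜ ∩ {ω | U ω = 0}) :=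
    disjoint_left.2 fun ω h1 h0 ↦ zero_ne_one (h0.2.symm.trans h1.2)
  rw [measure_union hdisj (hA.compl.inter (measurableSet_eq_fun hU measurable_const)),
    inter_comm A, inter_comm Aᶜ, (Indep_iff _ _ _).1 hind _ _ (hU_level 1) hAm,
    (Indep_iff _ _ _).1 hind _ _ (hU_level 0) hAm.compl, hU0, hU1, prob_compl_eq_one_sub hA,
    ← mul_add, add_tsub_cancel_of_le prob_le_one, mul_one]

theorem inter_union_compl_inter_ae_eq (h01 : ∀ᵐ ω ∂P, U ω = 0 ∨ U ω = 1) (A : Set Ω) :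
    ((A ∩ {ω | U ω = 1}) ∪ (Aᶜ ∩ {ω | U ω = 0}) : Set Ω) =ᵐ[P]
      ((A ∩ {ω | U ω = 1}) ∪ (Aᶜ ∩ {ω | U ω = 1}ᶜ) : Set Ω) := by
  rw [Filter.eventuallyEq_set]
  filter_upwards [h01] with ω hω
  rcases hω with h | h <;> simp [h]

theorem mixture_ae_eq_indicator_add_indicator (h01 : ∀ᵐ ω ∂P, U ω = 0 ∨ U ω = 1)
    {X Y : Ω → ℝ} (hXY : X =ᵐ[P] Y) :
    (fun ω ↦ U ω * X ω + (1 - U ω) * (1 - X ω)) =ᵐ[P]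
      {ω | U ω = 1}.indicator Y + {ω | U ω = 1}ᶜ.indicator (1 - Y) := by
  filter_upwards [h01, hXY] with ω hω hXYω
  rcases hω with h | h <;> simp [h, hXYω]

theorem mixture_mem_union_image (h01 : ∀ᵐ ω ∂P, U ω = 0 ∨ U ω = 1) {X : Ω → ℝ}
    {s : Finset ℝ} (hX : ∀ᵐ ω ∂P, X ω ∈ s) :
    ∀ᵐ ω ∂P, U ω * X ω + (1 - U ω) * (1 - X ω) ∈ s ∪ s.image (1 - ·) := by
  filter_upwards [h01, hX] with ω hω hXω
  rcases hω with h | h <;> simp [h, hXω]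

end Mixture

theorem mixture_coherent {Ω : Type} [mΩ : MeasurableSpace Ω] (P : Measure Ω)
    [IsProbabilityMeasure P] (n M : ℕ)
    (A : Set Ω) (hA : MeasurableSet A)
    (G : Fin n → MeasurableSpace Ω) (hG : ∀ i, G i ≤ mΩ)
    (X : Fin n → Ω → ℝ)
    (hX : ∀ i, X i =ᵐ[P] P[A.indicator (fun _ => (1 : ℝ)) | G i])
    (hXfin : ∀ i, ∃ s : Finset ℝ, s.card ≤ M ∧ ∀ᵐ ω ∂P, X i ω ∈ s)
    (U : Ω → ℝ) (hU : Measurable U)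
    (hU0 : P {ω | U ω = 0} = 1 / 2) (hU1 : P {ω | U ω = 1} = 1 / 2)
    (hindep : ProbabilityTheory.Indep (MeasurableSpace.comap U inferInstance)
      ((⨆ i, G i) ⊔ MeasurableSpace.generateFrom {A}) P)
    (Xt : Fin n → Ω → ℝ)
    (hXt : Xt = fun i ω => U ω * X i ω + (1 - U ω) * (1 - X i ω))
    (At : Set Ω) (hAt : At = (A ∩ {ω | U ω = 1}) ∪ (Aᶜ ∩ {ω | U ω = 0}))
    (Gt : Fin n → MeasurableSpace Ω)
    (hGt : Gt = fun i => G i ⊔ MeasurableSpace.comap U inferInstance) :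
    P At = 1 / 2 ∧
      (∀ i, Xt i =ᵐ[P] P[At.indicator (fun _ => (1 : ℝ)) | Gt i]) ∧
      (∀ i, ∃ s : Finset ℝ, s.card ≤ 2 * M ∧ ∀ᵐ ω ∂P, Xt i ω ∈ s) := by
  subst hXt hAt hGt
  have h01 := ae_eq_zero_or_eq_one_of_measure_eq_half hU hU0 hU1
  have hmA : (⨆ i, G i) ⊔ MeasurableSpace.generateFrom {A} ≤ mΩ :=
    sup_le (iSup_le hG) (MeasurableSpace.generateFrom_le (by simpa using hA))
  have hAmA : MeasurableSet[(⨆ i, G i) ⊔ MeasurableSpace.generateFrom {A}] A :=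
    le_sup_right (a := ⨆ i, G i) _ (MeasurableSpace.measurableSet_generateFrom rfl)
  refine ⟨measure_inter_union_compl_inter_eq_half hU hU0 hU1 hindep hA hAmA,
    fun i ↦ ?_, fun i ↦ ?_⟩
  · set E := {ω | U ω = 1}
    set Y := P[A.indicator (fun _ ↦ (1 : ℝ)) | G i ⊔ MeasurableSpace.comap U inferInstance]
    have hYX : Y =ᵐ[P] X i :=
      (condExp_sup_ae_eq_condExp_of_indep ((le_iSup G i).trans le_sup_left) hmA hU.comap_le
        hindep (stronglyMeasurable_const.indicator hAmA)
        ((integrable_const 1).indicator hA)).trans (hX i).symm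
    calc _ =ᵐ[P] E.indicator Y + Eᶜ.indicator (1 - Y) :=
          mixture_ae_eq_indicator_add_indicator h01 hYX.symm
      _ =ᵐ[P] P[(A ∩ E ∪ Aᶜ ∩ Eᶜ).indicator (fun _ ↦ 1) |
          G i ⊔ MeasurableSpace.comap U inferInstance] :=
        (condExp_indicator_inter_union_compl_inter (sup_le (hG i) hU.comap_le) hA
          (le_sup_right (a := G i) _ ⟨{1}, measurableSet_singleton 1, rfl⟩)).symm
      _ =ᵐ[P] _ := condExp_congr_ae
          (indicator_ae_eq_of_ae_eq_set (inter_union_compl_inter_ae_eq h01 A).symm)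
  · obtain ⟨s, hs, hXs⟩ := hXfin i
    refine ⟨s ∪ s.image (1 - ·), ?_, mixture_mem_union_image h01 hXs⟩
    have := s.card_image_le (f := (1 - ·))
    exact (Finset.card_union_le _ _).trans (by omega)
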